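/- arXiv:2504.05175 — 9 statements merged into one kernel-verified Lean document; each statement's English description precedes it below -/
import Mathlib

section
/- Let X be a finite topological T₀-space that is a minimal finite space (i.e., X has no down beat points and no up beat points). Then every semiflow φ : ℝ≥0 × X → X on X is trivial. -/
/-!
For small times `s`, continuity of `s ↦ φ s x` at `0` keeps `φ s x` inside the open set `U_x`,
i.e. `φ s x ⤳ x`, uniformly in the finitely many `x`. A continuous self-map `f` with `f x ⤳ x`
for all `x` is the identity when there are no down beat points: at a minimal `x` with `f x ≠ x`,
every `y` strictly below `x` satisfies `y = f y ⤳ f x`, so `f x` would be the greatest element of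
`U_x \ {x}`. Hence `φ s = id` for small `s`, and for all `s` by the semigroup law.
-/

open NNReal

/-- A semiflow on a topological space `X`: a jointly continuous map
`φ : ℝ≥0 × X → X` with `φ 0 x = x` and `φ s (φ t x) = φ (s + t) x`. -/
def IsSemiflow {X : Type*} [TopologicalSpace X] (φ : ℝ≥0 → X → X) : Prop :=
  Continuous (fun p : ℝ≥0 × X => φ p.1 p.2) ∧
  (∀ x : X, φ 0 x = x) ∧
  ∀ (s t : ℝ≥0) (x : X), φ s (φ t x) = φ (s + t) x

/-- A semiflow is trivial if every time-`t` map is the identity. -/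
def IsTrivialSemiflow {X : Type*} [TopologicalSpace X] (φ : ℝ≥0 → X → X) : Prop :=
  ∀ (t : ℝ≥0) (x : X), φ t x = x

/-- `x` is a down beat point: `U_x \ {x}` has a greatest element in the
specialization order (`y ⤳ x` means `y ≤ x`, i.e. `y ∈ U_x`). -/
def IsDownBeatPoint {X : Type*} [TopologicalSpace X] (x : X) : Prop :=
  ∃ m : X, (m ⤳ x ∧ m ≠ x) ∧ ∀ y : X, y ⤳ x → y ≠ x → y ⤳ m

/-- `x` is an up beat point: `F_x \ {x}` has a least element in the
specialization order. -/
def IsUpBeatPoint {X : Type*} [TopologicalSpace X] (x : X) : Prop :=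
  ∃ m : X, (x ⤳ m ∧ m ≠ x) ∧ ∀ y : X, x ⤳ y → y ≠ x → m ⤳ y

open Topology Filter

theorem wellFounded_specializes_and_ne (X : Type*) [TopologicalSpace X] [Finite X] [T0Space X] :
    WellFounded fun y x : X => y ⤳ x ∧ y ≠ x := by
  have : IsTrans X fun y x => y ⤳ x ∧ y ≠ x :=
    ⟨fun a b c hab hbc => ⟨hab.1.trans hbc.1, fun hac => hab.2 <| by
      subst hac; exact (hab.1.antisymm hbc.1).eq⟩⟩
  have : Std.Irrefl fun y x : X => y ⤳ x ∧ y ≠ x := ⟨fun _ h => h.2 rfl⟩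
  exact Finite.wellFounded_of_trans_of_irrefl _

theorem Continuous.eq_self_of_specializes {X : Type*} [TopologicalSpace X] [Finite X] [T0Space X]
    (hdown : ∀ x : X, ¬ IsDownBeatPoint x) {f : X → X} (hf : Continuous f)
    (hle : ∀ x, f x ⤳ x) (x : X) : f x = x := by
  induction x using (wellFounded_specializes_and_ne X).induction with
  | _ x ih =>
    by_contra hne
    refine hdown x ⟨f x, ⟨hle x, hne⟩, fun y hyx hyne => ?_⟩
    simpa only [ih y ⟨hyx, hyne⟩] using hyx.map hf

section Semiflow

variable {X : Type*} {φ : ℝ≥0 → X → X}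

theorem semiflow_apply_nsmul (h0 : ∀ x, φ 0 x = x)
    (hadd : ∀ s t x, φ s (φ t x) = φ (s + t) x) (n : ℕ) (s : ℝ≥0) :
    φ (n • s) = (φ s)^[n] := by
  induction n with
  | zero => funext x; simpa using h0 x
  | succ n ih => funext x; rw [Function.iterate_succ_apply', ← ih, hadd, succ_nsmul, add_comm]

theorem isTrivialSemiflow_of_eventually_eq_id [TopologicalSpace X] (h0 : ∀ x, φ 0 x = x)
    (hadd : ∀ s t x, φ s (φ t x) = φ (s + t) x) (hsmall : ∀ᶠ s in 𝓝 0, φ s = id) :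
    IsTrivialSemiflow φ := by
  intro t x
  have hlim : Tendsto (fun n : ℕ => t / n) atTop (𝓝 0) := tendsto_const_div_atTop_nhds_zero_nat t
  obtain ⟨n, hid, hn⟩ := ((hlim.eventually hsmall).and (eventually_ne_atTop 0)).exists
  calc φ t x = φ (n • (t / n)) x := by rw [nsmul_eq_mul, mul_div_cancel₀ _ (Nat.cast_ne_zero.2 hn)]
    _ = x := by rw [semiflow_apply_nsmul h0 hadd, hid, Function.iterate_id, id]

variable [TopologicalSpace X]

theorem IsSemiflow.continuous_apply (hφ : IsSemiflow φ) (t : ℝ≥0) : Continuous (φ t) :=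
  hφ.1.comp (continuous_const.prodMk continuous_id)

theorem IsSemiflow.eventually_specializes [Finite X] (hφ : IsSemiflow φ) :
    ∀ᶠ s in 𝓝 0, ∀ x, φ s x ⤳ x := by
  refine eventually_all.2 fun x => ?_
  have hcx : Continuous fun s => φ s x := hφ.1.comp (continuous_id.prodMk continuous_const)
  have hU : nhdsKer {x} ∈ 𝓝 (φ 0 x) := by
    rw [hφ.2.1]; exact isOpen_nhdsKer.mem_nhds (subset_nhdsKer rfl)
  filter_upwards [hcx.continuousAt.preimage_mem_nhds hU] with s hs
  exact mem_nhdsKer_singleton.1 hs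

theorem IsSemiflow.eventually_eq_id [Finite X] [T0Space X]
    (hdown : ∀ x : X, ¬ IsDownBeatPoint x) (hφ : IsSemiflow φ) : ∀ᶠ s in 𝓝 0, φ s = id :=
  hφ.eventually_specializes.mono fun s hs =>
    funext ((hφ.continuous_apply s).eq_self_of_specializes hdown hs)

end Semiflow

theorem semiflow_trivial_of_minimal_general {X : Type*} [TopologicalSpace X] [Finite X] [T0Space X]
    (hdown : ∀ x : X, ¬ IsDownBeatPoint x)
    (φ : ℝ≥0 → X → X) (hφ : IsSemiflow φ) : IsTrivialSemiflow φ :=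
  isTrivialSemiflow_of_eventually_eq_id hφ.2.1 hφ.2.2 (hφ.eventually_eq_id hdown)

/-- On a minimal finite space (no down beat points and no up beat points),
every semiflow is trivial. -/
theorem semiflow_trivial_of_minimal {X : Type*} [TopologicalSpace X] [Finite X] [T0Space X]
    (hdown : ∀ x : X, ¬ IsDownBeatPoint x) (hup : ∀ x : X, ¬ IsUpBeatPoint x)
    (φ : ℝ≥0 → X → X) (hφ : IsSemiflow φ) : IsTrivialSemiflow φ :=
  semiflow_trivial_of_minimal_general hdown φ hφ
end

section
/- Let X be a finite topological T₀-space and let φ : ℝ≥0 × X → X be a semiflow. If s, t ∈ ℝ≥0 satisfy s < t, then φ(t,x) ≤ φ(s,x) in the specialization order (i.e., φ(t,x) ⤳ φ(s,x)) for every x ∈ X. -/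
open NNReal

/-!
In a finite space every point `x` has a smallest open neighbourhood, the set of points
specializing to `x`. By continuity each orbit `t ↦ φ t x` therefore stays below `x` for small
times, and by finiteness there is a common bound on these times. The times `t` with
`φ t x ⤳ x` for all `x` form an additive submonoid of `ℝ≥0` by the semiflow law, and a
submonoid that is a neighbourhood of `0` is everything. Finally `φ t x = φ (t - s) (φ s x)`.
-/

open Filter Topology

theorem AddSubmonoid.eq_top_of_mem_nhds_zero {𝕜 : Type*} [Semifield 𝕜] [CharZero 𝕜]
    [TopologicalSpace 𝕜] [ContinuousSMul ℚ≥0 𝕜] [ContinuousMul 𝕜] {M : AddSubmonoid 𝕜}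
    (hM : (M : Set 𝕜) ∈ 𝓝 0) : M = ⊤ := by
  refine eq_top_iff.2 fun r _ => ?_
  obtain ⟨n, hn, hrn⟩ := ((eventually_ne_atTop 0).and
    ((tendsto_const_div_atTop_nhds_zero_nat r).eventually_mem hM)).exists
  simpa [nsmul_eq_mul, mul_div_cancel₀ r (Nat.cast_ne_zero.2 hn)] using M.nsmul_mem hrn n

theorem AlexandrovDiscrete.eventually_specializes {X : Type*} [TopologicalSpace X]
    [AlexandrovDiscrete X] (x : X) : ∀ᶠ y in 𝓝 x, y ⤳ x := by
  rw [← principal_nhdsKer_singleton]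
  exact fun _ => mem_nhdsKer_singleton.1

namespace IsSemiflow

variable {X : Type*} [TopologicalSpace X] {φ : ℝ≥0 → X → X}

def specializingTimes (hφ : IsSemiflow φ) : AddSubmonoid ℝ≥0 where
  carrier := {t | ∀ x, φ t x ⤳ x}
  zero_mem' x := by rw [hφ.2.1 x]
  add_mem' {s t} hs ht x := by
    rw [← hφ.2.2]
    exact (hs _).trans (ht x)

theorem tendsto_apply_nhds_zero (hφ : IsSemiflow φ) (x : X) :
    Tendsto (φ · x) (𝓝 0) (𝓝 x) := by
  have h : Continuous (φ · x) := hφ.1.comp (continuous_id.prodMk continuous_const)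
  simpa only [hφ.2.1 x] using h.tendsto 0

theorem specializingTimes_mem_nhds_zero [Finite X] (hφ : IsSemiflow φ) :
    (hφ.specializingTimes : Set ℝ≥0) ∈ 𝓝 0 :=
  eventually_all.2 fun x =>
    (hφ.tendsto_apply_nhds_zero x).eventually (AlexandrovDiscrete.eventually_specializes x)

theorem specializes_self [Finite X] (hφ : IsSemiflow φ) (t : ℝ≥0) (x : X) : φ t x ⤳ x :=
  (AddSubmonoid.eq_top_iff' _).1 (AddSubmonoid.eq_top_of_mem_nhds_zero
    hφ.specializingTimes_mem_nhds_zero) t x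

end IsSemiflow

theorem semiflow_antitone_general {X : Type*} [TopologicalSpace X] [Finite X]
    (φ : ℝ≥0 → X → X) (hφ : IsSemiflow φ) (s t : ℝ≥0) (hst : s < t) :
    ∀ x : X, φ t x ⤳ φ s x := by
  intro x
  rw [← tsub_add_cancel_of_le hst.le, ← hφ.2.2]
  exact hφ.specializes_self (t - s) (φ s x)

/-- For a semiflow on a finite `T₀`-space, later times are lower in the
specialization order: if `s < t` then `φ t x ⤳ φ s x` for every `x`. -/
theorem semiflow_antitone {X : Type*} [TopologicalSpace X] [Finite X] [T0Space X]
    (φ : ℝ≥0 → X → X) (hφ : IsSemiflow φ) (s t : ℝ≥0) (hst : s < t) :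
    ∀ x : X, φ t x ⤳ φ s x :=
  semiflow_antitone_general φ hφ s t hst
end

section
/- Let X be a finite topological T₀-space and let φ : ℝ≥0 × X → X be a semiflow. If y ∈ X is a minimal element of X in the specialization order (equivalently, y has height 0, equivalently {y} is closed), then φ(t,y) = y for every t ∈ ℝ≥0. -/
open NNReal

/-
A point `y` with no other point specializing to it is isolated in an Alexandrov-discrete
space, so the orbit `t ↦ φ t y` leaves `y` on a closed set of times. If that set were nonempty
it would have a least element `t₀ > 0`, and then `φ t₀ y = φ (t₀/2) (φ (t₀/2) y) = y`.
-/

theorem isOpen_singleton_of_forall_specializes_eq {X : Type*} [TopologicalSpace X]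
    [AlexandrovDiscrete X] {y : X} (hy : ∀ z : X, z ⤳ y → z = y) : IsOpen ({y} : Set X) :=
  isOpen_iff_forall_specializes.2 fun z _ hzw hw => hy z (hw ▸ hzw)

theorem IsSemiflow.apply_eq_self_of_isOpen_singleton {X : Type*} [TopologicalSpace X]
    {φ : ℝ≥0 → X → X} (hφ : IsSemiflow φ) {y : X} (hy : IsOpen ({y} : Set X)) (t : ℝ≥0) :
    φ t y = y := by
  obtain ⟨hcont, hzero, hadd⟩ := hφ
  set C : Set ℝ≥0 := {t | φ t y ≠ y}
  have hC : IsClosed C :=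
    hy.isClosed_compl.preimage (hcont.comp (continuous_id.prodMk continuous_const))
  by_contra ht
  have hmin : sInf C ∈ C := hC.csInf_mem ⟨t, ht⟩ (OrderBot.bddBelow C)
  have hpos : sInf C ≠ 0 := fun h => hmin (h ▸ hzero y)
  have hhalf : φ (sInf C / 2) y = y :=
    not_not.1 (notMem_of_lt_csInf' (half_lt_self hpos))
  apply hmin
  rw [← add_halves (sInf C), ← hadd, hhalf, hhalf]

theorem semiflow_fixes_minimal_general {X : Type*} [TopologicalSpace X] [Finite X]
    (φ : ℝ≥0 → X → X) (hφ : IsSemiflow φ) (y : X) (hy : ∀ z : X, z ⤳ y → z = y) :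
    ∀ t : ℝ≥0, φ t y = y :=
  hφ.apply_eq_self_of_isOpen_singleton (isOpen_singleton_of_forall_specializes_eq hy)

/-- A semiflow on a finite `T₀`-space fixes every point that is minimal in the
specialization order (i.e. of height `0`). -/
theorem semiflow_fixes_minimal {X : Type*} [TopologicalSpace X] [Finite X] [T0Space X]
    (φ : ℝ≥0 → X → X) (hφ : IsSemiflow φ) (y : X) (hy : ∀ z : X, z ⤳ y → z = y) :
    ∀ t : ℝ≥0, φ t y = y :=
  semiflow_fixes_minimal_general φ hφ y hy
end

section
/- Let X be a finite topological T₀-space and let φ : ℝ≥0 × X → X be a semiflow. Then the time-t maps for positive times all coincide: for all s, t ∈ ℝ≥0 with s > 0 and t > 0 and every x ∈ X, φ(s,x) = φ(t,x). -/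
open NNReal

/-!
In a finite monoid some fixed power `n ≠ 0` of every element is idempotent. Applied to the
monoid of self-maps of `X`, with `φ u = (φ (u / n))^[n]`, this makes every time map `φ u`
idempotent, hence `φ (k / n * u) = φ u` for all positive integers `k, n`. So the orbit map
`u ↦ φ u x` takes the value `φ t x` at times accumulating at any `s > 0`; by continuity
`φ t x ⤳ φ s x`, symmetrically `φ s x ⤳ φ t x`, and `T₀` gives equality.
-/

open Filter Topology

theorem exists_ne_zero_forall_isIdempotentElem_pow (M : Type*) [Monoid M] [Finite M] :
    ∃ n ≠ 0, ∀ a : M, IsIdempotentElem (a ^ n) := by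
  obtain ⟨i, j, hij, hpow⟩ := Finite.exists_ne_map_eq_of_infinite fun n : ℕ ↦ fun a : M ↦ a ^ n
  wlog hlt : i < j generalizing i j
  · exact this j i hij.symm hpow.symm (by omega)
  obtain ⟨p, rfl⟩ := Nat.exists_eq_add_of_lt hlt
  have hperiod (a : M) (k : ℕ) : a ^ (i + k * (p + 1)) = a ^ i := by
    induction k with
    | zero => simp
    | succ k ih =>
      rw [add_one_mul, ← add_assoc, pow_add, ih, ← pow_add, ← add_assoc]
      exact (congrFun hpow a).symm
  refine ⟨(i + 1) * (p + 1), by positivity, fun a ↦ ?_⟩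
  obtain ⟨m, hm⟩ : ∃ m, (i + 1) * (p + 1) = i + m := Nat.exists_eq_add_of_le (by nlinarith)
  rw [IsIdempotentElem, ← pow_add]
  nth_rw 1 [hm]
  rw [add_comm i m, add_assoc, pow_add, hperiod, ← pow_add, add_comm, ← hm]

theorem NNReal.tendsto_natCeil_mul_div_atTop (r : ℝ≥0) :
    Tendsto (fun n : ℕ ↦ (⌈n * r⌉₊ : ℝ≥0) / n) atTop (𝓝 r) := by
  have hupper : Tendsto (fun n : ℕ ↦ r + 1 / n) atTop (𝓝 r) := by
    simpa using tendsto_const_nhds.add (tendsto_const_div_atTop_nhds_zero_nat (1 : ℝ≥0))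
  refine tendsto_of_tendsto_of_tendsto_of_le_of_le' tendsto_const_nhds hupper ?_ ?_
  · filter_upwards [eventually_gt_atTop 0] with n hn
    rw [le_div_iff₀ (by exact_mod_cast hn), mul_comm]
    exact Nat.le_ceil _
  · filter_upwards [eventually_gt_atTop 0] with n hn
    rw [div_le_iff₀ (by exact_mod_cast hn), add_mul, one_div_mul_cancel (by positivity), mul_comm]
    exact (Nat.ceil_lt_add_one (by positivity)).le

namespace IsSemiflow

variable {X : Type*} [TopologicalSpace X] {φ : ℝ≥0 → X → X}

theorem apply_natCast_mul (hφ : IsSemiflow φ) (n : ℕ) (u : ℝ≥0) :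
    φ (n * u) = (φ u)^[n] := by
  induction n with
  | zero => funext x; simpa using hφ.2.1 x
  | succ n ih =>
    funext x
    rw [Function.iterate_succ_apply', ← ih, hφ.2.2, Nat.cast_succ, add_one_mul, add_comm]

theorem comp_self [Finite X] (hφ : IsSemiflow φ) (u : ℝ≥0) : φ u ∘ φ u = φ u := by
  have : Finite (Function.End X) := inferInstanceAs (Finite (X → X))
  obtain ⟨K, hK, hidem⟩ := exists_ne_zero_forall_isIdempotentElem_pow (Function.End X)
  have hu : φ u = (φ (u / K))^[K] := by
    rw [← hφ.apply_natCast_mul, mul_div_cancel₀ _ (by exact_mod_cast hK)]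
  rw [hu]
  exact hidem (φ (u / K) : Function.End X)

theorem apply_natCast_mul_of_ne_zero [Finite X] (hφ : IsSemiflow φ) {n : ℕ} (hn : n ≠ 0)
    (u : ℝ≥0) : φ (n * u) = φ u := by
  rw [hφ.apply_natCast_mul]
  exact IsIdempotentElem.pow_eq (M := Function.End X) (hφ.comp_self u) hn

theorem apply_natCast_div_mul [Finite X] (hφ : IsSemiflow φ) {k n : ℕ} (hk : k ≠ 0)
    (hn : n ≠ 0) (u : ℝ≥0) : φ (k / n * u) = φ u := by
  rw [div_mul_eq_mul_div, mul_div_assoc, hφ.apply_natCast_mul_of_ne_zero hk,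
    ← hφ.apply_natCast_mul_of_ne_zero hn, mul_div_cancel₀ _ (by exact_mod_cast hn)]

theorem apply_specializes_apply [Finite X] (hφ : IsSemiflow φ) {s t : ℝ≥0} (hs : 0 < s)
    (ht : 0 < t) (x : X) : φ t x ⤳ φ s x := by
  have hlim : Tendsto (fun n : ℕ ↦ (⌈n * (s / t)⌉₊ : ℝ≥0) / n * t) atTop (𝓝 s) := by
    simpa [div_mul_cancel₀ _ ht.ne'] using
      (NNReal.tendsto_natCeil_mul_div_atTop (s / t)).mul_const t
  have hconst : ∀ᶠ n : ℕ in atTop, φ ((⌈n * (s / t)⌉₊ : ℝ≥0) / n * t) x = φ t x := by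
    filter_upwards [eventually_gt_atTop 0] with n hn
    rw [hφ.apply_natCast_div_mul _ hn.ne']
    positivity
  have hcont : Continuous fun u ↦ φ u x := hφ.1.comp (continuous_id.prodMk continuous_const)
  have hφt : Tendsto (fun _ : ℕ ↦ φ t x) atTop (𝓝 (φ s x)) :=
    ((hcont.tendsto s).comp hlim).congr' hconst
  exact specializes_iff_pure.2 (by simpa [Tendsto, Filter.map_const] using hφt)

end IsSemiflow

/-- For a semiflow on a finite `T₀`-space, all time-`t` maps for positive
times coincide. -/
theorem semiflow_eq_of_pos {X : Type*} [TopologicalSpace X] [Finite X] [T0Space X]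
    (φ : ℝ≥0 → X → X) (hφ : IsSemiflow φ) (s t : ℝ≥0) (hs : 0 < s) (ht : 0 < t) :
    ∀ x : X, φ s x = φ t x := fun x ↦
  ((hφ.apply_specializes_apply ht hs x).antisymm (hφ.apply_specializes_apply hs ht x)).eq
end

section
/- Let X be a finite topological T₀-space and let φ : ℝ≥0 × X → X be a semiflow, and set r := φ(1,·) : X → X. Then the image r(X) is a strong deformation retract of X: there is a homotopy H : [0,1] × X → X relative to the subset r(X) from the identity map of X to the map r (so H(0,·) = id, H(1,·) = r, and H(s,a) = a for all s ∈ [0,1] and a ∈ r(X)). -/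
open NNReal

/-!
The minimal open neighbourhood `U_y = {z | z ⤳ y}` of a point of a finite space is forward
invariant under the semiflow: this holds for small times by continuity at `(0, y)`, and the times
for which it holds form an additive submonoid of `ℝ≥0` containing a neighbourhood of `0`, hence
all of `ℝ≥0`. So every orbit `t ↦ φ t x` is antitone for the specialization order, which is a
partial order since `X` is `T₀`. By pigeonhole the orbit takes the same value `a` at two times
`u < v` in `(0, 1)`, hence is constant on `[u, v]`; thus `a` is fixed for small times, hence for
all times, and `φ 1 x = a`. The homotopy is then `H s = φ s`.
-/

open Filter Topology Set

theorem NNReal.addSubmonoid_eq_top_of_mem_nhds_zero (S : AddSubmonoid ℝ≥0)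
    (hS : (S : Set ℝ≥0) ∈ 𝓝 0) : S = ⊤ := by
  refine (AddSubmonoid.eq_top_iff' S).2 fun t => ?_
  obtain ⟨n, hn, hmem⟩ := ((eventually_ne_atTop 0).and
    ((tendsto_const_div_atTop_nhds_zero_nat t).eventually hS)).exists
  have hn' : (n : ℝ≥0) ≠ 0 := Nat.cast_ne_zero.2 hn
  simpa [nsmul_eq_mul, mul_div_cancel₀ t hn'] using S.nsmul_mem hmem n

namespace IsSemiflow

variable {X : Type*} [TopologicalSpace X] {φ : ℝ≥0 → X → X}

theorem continuous_uncurry (hφ : IsSemiflow φ) : Continuous (fun p : ℝ≥0 × X => φ p.1 p.2) :=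
  hφ.1

theorem apply_zero (hφ : IsSemiflow φ) (x : X) : φ 0 x = x := hφ.2.1 x

theorem apply_apply (hφ : IsSemiflow φ) (s t : ℝ≥0) (x : X) : φ s (φ t x) = φ (s + t) x :=
  hφ.2.2 s t x

theorem forall_of_eventually_nhds_zero (hφ : IsSemiflow φ) {p : (X → X) → Prop} (hid : p id)
    (hcomp : ∀ f g, p f → p g → p (f ∘ g)) (hsmall : ∀ᶠ t in 𝓝 0, p (φ t)) (t : ℝ≥0) :
    p (φ t) := by
  let S : AddSubmonoid ℝ≥0 :=
    { carrier := {t | p (φ t)}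
      zero_mem' := by simpa [show φ 0 = id from funext hφ.apply_zero] using hid
      add_mem' := fun {s t} hs ht => by
        simpa [show φ (s + t) = φ s ∘ φ t from funext fun x => (hφ.apply_apply s t x).symm] using
          hcomp _ _ hs ht }
  change t ∈ S
  rw [NNReal.addSubmonoid_eq_top_of_mem_nhds_zero S hsmall]
  exact AddSubmonoid.mem_top t

theorem mapsTo_nhdsKer [AlexandrovDiscrete X] (hφ : IsSemiflow φ) (y : X) (t : ℝ≥0) :
    MapsTo (φ t) (nhdsKer {y}) (nhdsKer {y}) := by
  refine hφ.forall_of_eventually_nhds_zero (p := fun f => MapsTo f _ _) (mapsTo_id _)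
    (fun f g hf hg => hf.comp hg) ?_ t
  have hcont : ∀ᶠ q in 𝓝 (0, y), φ q.1 q.2 ∈ nhdsKer {y} :=
    hφ.continuous_uncurry.continuousAt.preimage_mem_nhds (by
      simpa [hφ.apply_zero] using isOpen_nhdsKer.mem_nhds (subset_nhdsKer (mem_singleton y)))
  rw [nhds_prod_eq] at hcont
  filter_upwards [hcont.curry] with s hs
  rwa [← principal_nhdsKer_singleton, eventually_principal] at hs

theorem specializes_of_le [AlexandrovDiscrete X] (hφ : IsSemiflow φ) (x : X) {s t : ℝ≥0}
    (hst : s ≤ t) : φ t x ⤳ φ s x := by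
  rw [← tsub_add_cancel_of_le hst, ← hφ.apply_apply, ← mem_nhdsKer_singleton]
  exact hφ.mapsTo_nhdsKer _ _ (subset_nhdsKer (mem_singleton _))

theorem exists_lt_forall_apply_eq [Finite X] [T0Space X] (hφ : IsSemiflow φ) (x : X)
    {τ : ℝ≥0} (hτ : 0 < τ) : ∃ u < τ, ∀ t, φ t (φ u x) = φ u x := by
  obtain ⟨u, hu, v, -, hlt, heq⟩ :=
    (Ioo_infinite hτ).exists_lt_map_eq_of_mapsTo (mapsTo_univ (φ · x) _) finite_univ
  refine ⟨u, hu.2, hφ.forall_of_eventually_nhds_zero (p := fun f => f (φ u x) = φ u x) rfl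
    (fun f g hf hg => by simp only [Function.comp_apply, hg, hf]) ?_⟩
  filter_upwards [Iic_mem_nhds (tsub_pos_of_lt hlt)] with δ hδ
  have hδv : δ + u ≤ v := (le_tsub_iff_right (le_of_lt hlt)).1 hδ
  rw [hφ.apply_apply]
  exact (hφ.specializes_of_le x le_add_self).antisymm
    (heq ▸ hφ.specializes_of_le x hδv) |>.eq

theorem apply_eq_self_of_mem_range [Finite X] [T0Space X] (hφ : IsSemiflow φ) {τ : ℝ≥0}
    (hτ : 0 < τ) {a : X} (ha : a ∈ range (φ τ)) (t : ℝ≥0) : φ t a = a := by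
  obtain ⟨x, rfl⟩ := ha
  obtain ⟨u, hu, hfix⟩ := hφ.exists_lt_forall_apply_eq x hτ
  have hτu : φ τ x = φ u x := by rw [← tsub_add_cancel_of_le hu.le, ← hφ.apply_apply, hfix]
  rw [hτu, hfix]

end IsSemiflow

/-- For a semiflow `φ` on a finite `T₀`-space, the image of the time-one map
`r := φ 1` is a strong deformation retract of `X`: there is a homotopy `H`
relative to `r(X)` from the identity to `r`. -/
theorem semiflow_time_one_strong_deformation_retract {X : Type*} [TopologicalSpace X]
    [Finite X] [T0Space X] (φ : ℝ≥0 → X → X) (hφ : IsSemiflow φ) :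
    ∃ H : unitInterval → X → X,
      Continuous (fun p : unitInterval × X => H p.1 p.2) ∧
      (∀ x : X, H 0 x = x) ∧
      (∀ x : X, H 1 x = φ 1 x) ∧
      ∀ (s : unitInterval), ∀ a ∈ Set.range (φ 1), H s a = a := by
  refine ⟨fun s => φ (unitInterval.toNNReal s), ?_, hφ.apply_zero, fun x => rfl,
    fun s a ha => hφ.apply_eq_self_of_mem_range one_pos ha _⟩
  exact hφ.continuous_uncurry.comp ((unitInterval.toNNReal_continuous.comp continuous_fst).prodMk continuous_snd)
end

section
/- Let X be a finite topological T₀-space. If φ : ℝ × X → X is a flow on X, then φ is trivial, i.e., φ(t,x) = x for every t ∈ ℝ and x ∈ X. -/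
open NNReal

/-- A flow on a topological space `X`: a jointly continuous map
`φ : ℝ × X → X` with `φ 0 x = x` and `φ s (φ t x) = φ (s + t) x`. -/
def IsFlow {X : Type*} [TopologicalSpace X] (φ : ℝ → X → X) : Prop :=
  Continuous (fun p : ℝ × X => φ p.1 p.2) ∧
  (∀ x : X, φ 0 x = x) ∧
  ∀ (s t : ℝ) (x : X), φ s (φ t x) = φ (s + t) x

/-- Every flow on a finite `T₀`-space is trivial. -/
theorem flow_trivial {X : Type*} [TopologicalSpace X] [Finite X] [T0Space X]
    (φ : ℝ → X → X) (hφ : IsFlow φ) : ∀ (t : ℝ) (x : X), φ t x = x := by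
  obtain ⟨-, h0, hco⟩ := hφ
  have hinv : ∀ s : ℝ, Function.LeftInverse (φ (-s)) (φ s) := by
    intro s x; rw [hco, neg_add_cancel, h0]
  have hriv : ∀ s : ℝ, Function.RightInverse (φ (-s)) (φ s) := by
    intro s x; rw [hco, add_neg_cancel, h0]
  letI := Fintype.ofFinite X
  letI := Classical.decEq X
  set n := Fintype.card (Equiv.Perm X) with hn
  have hnpos : 0 < n := Fintype.card_pos
  intro t x
  set s : ℝ := t / n with hs
  set e : Equiv.Perm X := ⟨φ s, φ (-s), hinv s, hriv s⟩ with he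
  have hiter : ∀ (k : ℕ) (y : X), (φ s)^[k] y = φ (k * s) y := by
    intro k
    induction k with
    | zero => intro y; simp [h0]
    | succ k ih =>
      intro y
      rw [Function.iterate_succ_apply', ih, hco]
      congr 1
      push_cast
      ring
  have hpow : e ^ n = 1 := pow_card_eq_one
  have hc : ⇑(e ^ n) = (φ s)^[n] := by rw [Equiv.Perm.coe_pow]; rfl
  have h1 : φ t x = (φ s)^[n] x := by
    rw [hiter]
    congr 1
    rw [hs]
    field_simp
  rw [h1, ← hc, hpow]
  rfl
end

section
/- Let X be a finite topological T₀-space and let r : X → X be a continuous map such that r ∘ r = r and r(x) ≤ x in the specialization order (i.e., r(x) ⤳ x) for every x ∈ X. Then the map φ : ℝ≥0 × X → X defined by φ(0,x) := x and φ(t,x) := r(x) for t > 0 is a semiflow on X (in particular, φ is continuous). -/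
open NNReal

/-- If `r : X → X` is continuous, idempotent and satisfies `r x ⤳ x` for all
`x`, then `φ 0 = id`, `φ t = r` for `t > 0` defines a semiflow on `X`. -/
theorem isSemiflow_of_retraction {X : Type*} [TopologicalSpace X] [Finite X] [T0Space X]
    (r : X → X) (hr : Continuous r) (hrr : r ∘ r = r) (hle : ∀ x : X, r x ⤳ x) :
    IsSemiflow (fun (t : ℝ≥0) (x : X) => if t = 0 then x else r x) := by
  refine ⟨?_, fun x => by simp, ?_⟩
  · rw [continuous_def]
    intro U hU
    have key : (fun p : ℝ≥0 × X => if p.1 = 0 then p.2 else r p.2) ⁻¹' U =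
        (Set.univ ×ˢ U) ∪ ({t : ℝ≥0 | t ≠ 0} ×ˢ (r ⁻¹' U)) := by
      ext ⟨t, x⟩
      by_cases ht : t = 0
      · simp [ht]
      · simp only [Set.mem_preimage, if_neg ht, Set.mem_union, Set.mem_prod,
          Set.mem_univ, true_and, Set.mem_setOf_eq]
        constructor
        · intro h; exact Or.inr ⟨ht, h⟩
        · rintro (h | ⟨-, h⟩)
          · exact (hle x).mem_open hU h
          · exact h
    rw [key]
    exact ((isOpen_univ.prod hU).union ((isOpen_ne).prod (hU.preimage hr)))
  · intro s t x
    by_cases hs : s = 0 <;> by_cases ht : t = 0 <;> simp [hs, ht, add_eq_zero]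
    exact congrFun hrr x
end

section
/- Let X be a finite topological T₀-space and let S_F(X) denote the number of distinct semiflows on X. Then X has no down beat points if and only if S_F(X) = 1 (i.e., the trivial semiflow is the unique semiflow on X). -/
open NNReal

/-!
Every semiflow `φ` moves points down: `φ t x ⤳ x`. Indeed, `φ s x` stays in the minimal open set
`U_x` for small `s`, uniformly in `x` since `X` is finite, and a large time is a multiple of a
small one. If `X` has no down beat points, a minimal point `x` moved by some `φ t` would be one:
every `y < x` is fixed, so by continuity of `φ t` it lies below `φ t x < x`. Conversely, if `x` is
a down beat point with `m` the greatest element of `U_x \ {x}`, the retraction `x ↦ m` is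
continuous and lies below the identity, and jumping to it at every positive time is a nontrivial
semiflow.
-/

open Filter Topology

section

variable {X : Type*} [TopologicalSpace X]

lemma continuous_of_specializes_imp [AlexandrovDiscrete X] {Y : Type*} [TopologicalSpace Y]
    {f : X → Y} (hf : ∀ a b, a ⤳ b → f a ⤳ f b) : Continuous f :=
  continuous_def.2 fun _ hU =>
    isOpen_iff_forall_specializes.2 fun a b hab hb => (hf a b hab).mem_open hU hb

lemma eventually_specializes_nhds [AlexandrovDiscrete X] (x : X) : ∀ᶠ y in 𝓝 x, y ⤳ x := by
  rw [← principal_nhdsKer_singleton]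
  exact fun _ => mem_nhdsKer_singleton.1

lemma wellFounded_specializes_ne [Finite X] [T0Space X] :
    WellFounded fun y x : X => y ⤳ x ∧ y ≠ x := by
  let := specializationOrder X
  exact (wellFounded_gt (α := X)).mono fun _ _ h => lt_of_le_of_ne h.1 h.2.symm

namespace IsSemiflow

variable {φ : ℝ≥0 → X → X}

lemma continuous_apply_s12 (h : IsSemiflow φ) (t : ℝ≥0) : Continuous (φ t) :=
  h.1.comp (Continuous.prodMk_right t)

lemma tendsto_nhds_zero (h : IsSemiflow φ) (x : X) : Tendsto (φ · x) (𝓝 0) (𝓝 x) := by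
  simpa only [Function.comp_def, h.2.1 x] using (h.1.comp (Continuous.prodMk_left x)).tendsto 0

lemma nsmul_specializes (h : IsSemiflow φ) {s : ℝ≥0} (hs : ∀ x, φ s x ⤳ x) (n : ℕ) (x : X) :
    φ (n • s) x ⤳ x := by
  induction n generalizing x with
  | zero => rw [zero_smul, h.2.1]
  | succ n ih => rw [succ_nsmul, ← h.2.2]; exact (ih _).trans (hs x)

lemma specializes [Finite X] (h : IsSemiflow φ) (t : ℝ≥0) (x : X) : φ t x ⤳ x := by
  have hsmall : ∀ᶠ s in 𝓝 0, ∀ x, φ s x ⤳ x :=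
    eventually_all.2 fun x => (h.tendsto_nhds_zero x).eventually (eventually_specializes_nhds x)
  obtain ⟨n, hn, hn0⟩ :=
    ((tendsto_const_div_atTop_nhds_zero_nat t).eventually hsmall).and (eventually_ne_atTop 0)
      |>.exists
  have ht : t = n • (t / n) := by
    rw [nsmul_eq_mul, mul_div_cancel₀ _ (Nat.cast_ne_zero.2 hn0)]
  rw [ht]
  exact h.nsmul_specializes hn n x

lemma isDownBeatPoint [Finite X] (h : IsSemiflow φ) {t : ℝ≥0} {x : X} (hmoved : φ t x ≠ x)
    (hfix : ∀ y, y ⤳ x → y ≠ x → φ t y = y) : IsDownBeatPoint x :=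
  ⟨φ t x, ⟨h.specializes t x, hmoved⟩, fun y hy hyx =>
    hfix y hy hyx ▸ hy.map (h.continuous_apply_s12 t)⟩

lemma isTrivialSemiflow [Finite X] [T0Space X] (hnb : ∀ x : X, ¬ IsDownBeatPoint x)
    (h : IsSemiflow φ) : IsTrivialSemiflow φ := by
  intro t x
  induction x using (wellFounded_specializes_ne (X := X)).induction with
  | _ x ih => exact not_not.1 fun hmoved => hnb x (h.isDownBeatPoint hmoved fun y hy hyx =>
      ih y ⟨hy, hyx⟩)

end IsSemiflow

lemma isSemiflow_trivial : IsSemiflow fun (_ : ℝ≥0) (x : X) => x :=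
  ⟨continuous_snd, fun _ => rfl, fun _ _ _ => rfl⟩

lemma isSemiflow_ite {g : X → X} (hg : Continuous g) (hgg : ∀ x, g (g x) = g x)
    (hspec : ∀ x, g x ⤳ x) : IsSemiflow fun t x => if t = 0 then x else g x := by
  refine ⟨?_, fun _ => if_pos rfl, fun s t x => ?_⟩
  · exact (isClosed_eq continuous_fst continuous_const).continuous_piecewise_of_specializes
      continuous_snd (hg.comp continuous_snd) fun p => hspec p.2
  · rcases eq_or_ne s 0 with rfl | hs <;> rcases eq_or_ne t 0 with rfl | ht <;> simp [*]

lemma IsDownBeatPoint.exists_retraction [AlexandrovDiscrete X] {x : X} (hx : IsDownBeatPoint x) :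
    ∃ g : X → X, Continuous g ∧ (∀ y, g (g y) = g y) ∧ (∀ y, g y ⤳ y) ∧ g x ≠ x := by
  classical
  obtain ⟨m, ⟨hmx, hne⟩, hgreatest⟩ := hx
  refine ⟨Function.update id x m, continuous_of_specializes_imp fun a b hab => ?_,
    fun y => ?_, fun y => ?_, by simpa using hne⟩
  · simp only [Function.update_apply, id]
    split_ifs with ha hb hb
    exacts [specializes_rfl, hmx.trans (ha ▸ hab), hgreatest a (hb ▸ hab) ha, hab]
  · by_cases hy : y = x <;> simp [hy, hne]
  · by_cases hy : y = x <;> simp [hy, hmx, specializes_rfl]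

end

/-- A finite `T₀`-space has no down beat points if and only if the trivial
semiflow is the unique semiflow on it, i.e. `S_F(X) = 1`. -/
theorem no_downBeatPoint_iff_unique_semiflow {X : Type*} [TopologicalSpace X] [Finite X]
    [T0Space X] :
    (∀ x : X, ¬ IsDownBeatPoint x) ↔
      Nat.card {φ : ℝ≥0 → X → X // IsSemiflow φ} = 1 := by
  rw [Nat.card_eq_one_iff_unique]
  constructor
  · intro hnb
    refine ⟨⟨fun φ ψ => Subtype.ext ?_⟩, ⟨⟨_, isSemiflow_trivial⟩⟩⟩
    funext t x
    rw [φ.2.isTrivialSemiflow hnb t x, ψ.2.isTrivialSemiflow hnb t x]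
  · rintro ⟨hunique, -⟩ x hx
    obtain ⟨g, hg, hgg, hspec, hgx⟩ := hx.exists_retraction
    have hflows := congrArg (fun φ : {φ : ℝ≥0 → X → X // IsSemiflow φ} => φ.1 1 x)
      (hunique.elim ⟨_, isSemiflow_ite hg hgg hspec⟩ ⟨_, isSemiflow_trivial⟩)
    exact hgx (by simpa using hflows)
end

section
/- Let X be a finite topological T₀-space and let x ∈ X. If x is not a down beat point and φ is a non-trivial semiflow on X such that φ(t,x) ≠ x for every t > 0, then there exists a down beat point y of X with y < x in the specialization order such that φ(t,y) ≠ y for every t > 0. -/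
open NNReal

open Filter Topology Set

namespace SemiflowAux

variable {X : Type*} [TopologicalSpace X]

/-- In a finite space, the set of points specializing to `y` (the minimal open
set of `y`) is open. -/
lemma isOpen_specSet [Finite X] (y : X) : IsOpen {z : X | z ⤳ y} := by
  have h1 : {z : X | z ⤳ y} = ⋂₀ {U : Set X | IsOpen U ∧ y ∈ U} := by
    ext z
    simp only [mem_sInter, mem_setOf_eq, specializes_iff_forall_open]
    exact ⟨fun h U hU => h U hU.1 hU.2, fun h U hU hyU => h U ⟨hU, hyU⟩⟩
  rw [h1]
  exact (Set.toFinite _).isOpen_sInter fun U hU => hU.1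

lemma cont_time (φ : ℝ≥0 → X → X) (hφ : IsSemiflow φ) (y : X) :
    Continuous fun t : ℝ≥0 => φ t y :=
  hφ.1.comp (continuous_id.prodMk continuous_const)

lemma cont_space (φ : ℝ≥0 → X → X) (hφ : IsSemiflow φ) (t : ℝ≥0) :
    Continuous fun z : X => φ t z :=
  hφ.1.comp (continuous_const.prodMk continuous_id)

lemma ev_spec [Finite X] (φ : ℝ≥0 → X → X) (hφ : IsSemiflow φ) (y : X) (s : ℝ≥0) :
    ∀ᶠ u in 𝓝 s, φ u y ⤳ φ s y := by
  have h := ((cont_time φ hφ y).continuousAt (x := s)).eventually_mem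
    ((isOpen_specSet (φ s y)).mem_nhds (specializes_refl _))
  exact h

/-- Purely arithmetic covering lemma: if `F ⊆ ℝ≥0` is closed under addition and
contains the interval `[s - δ, s]` (with `s > 0`, `δ > 0`), then for any `t`
there is `u ∈ F` with `t + u ∈ F`. -/
lemma cover {F : Set ℝ≥0} (hadd : ∀ a ∈ F, ∀ b ∈ F, a + b ∈ F)
    {s δ : ℝ≥0} (hs : 0 < s) (hδ : 0 < δ)
    (hsub : ∀ u : ℝ≥0, s ≤ u + δ → u ≤ s → u ∈ F) (t : ℝ≥0) :
    ∃ u ∈ F, t + u ∈ F := by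
  have hmul : ∀ (n : ℕ) (a : ℝ≥0), a ∈ F → ((n : ℝ≥0) + 1) * a ∈ F := by
    intro n
    induction n with
    | zero => intro a ha; simpa using ha
    | succ k ih =>
      intro a ha
      have h := hadd _ (ih a ha) a ha
      have he : ((k : ℝ≥0) + 1) * a + a = (((k + 1 : ℕ) : ℝ≥0) + 1) * a := by
        push_cast; ring
      rwa [he] at h
  have hS : (0:ℝ) < (s:ℝ) := hs
  have hD : (0:ℝ) < (δ:ℝ) := hδ
  set B : ℝ := (s:ℝ) * (s:ℝ) / (δ:ℝ) + (s:ℝ) with hB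
  have hbig : ∀ r : ℝ≥0, B ≤ (r:ℝ) → r ∈ F := by
    intro r hr
    have hssδ : (0:ℝ) ≤ (s:ℝ) * (s:ℝ) / (δ:ℝ) := by positivity
    have hSR : (s:ℝ) ≤ (r:ℝ) := by rw [hB] at hr; linarith
    set k : ℕ := ⌈(r:ℝ) / (s:ℝ)⌉₊ with hk
    have hrpos : (0:ℝ) < (r:ℝ) := lt_of_lt_of_le hS hSR
    have hk1 : 1 ≤ k := Nat.one_le_ceil_iff.mpr (div_pos hrpos hS)
    have hkposR : (0:ℝ) < (k:ℝ) := Nat.cast_pos.mpr hk1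
    have hkR : (r:ℝ) / (s:ℝ) ≤ (k:ℝ) := Nat.le_ceil _
    have hkub : (k:ℝ) < (r:ℝ) / (s:ℝ) + 1 := Nat.ceil_lt_add_one (by positivity)
    set a : ℝ≥0 := r / (k : ℝ≥0) with ha
    have hknz : (k : ℝ≥0) ≠ 0 := by
      exact Nat.cast_ne_zero.mpr (Nat.one_le_iff_ne_zero.mp hk1)
    have hcoea : (a:ℝ) = (r:ℝ) / (k:ℝ) := by
      rw [ha, NNReal.coe_div, NNReal.coe_natCast]
    have hrk : (r:ℝ) ≤ (k:ℝ) * (s:ℝ) := by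
      have := (div_le_iff₀ hS).mp hkR
      linarith
    have ha_le : a ≤ s := by
      rw [← NNReal.coe_le_coe, hcoea, div_le_iff₀ hkposR]
      linarith
    have ha_ge : (s:ℝ) ≤ (a:ℝ) + (δ:ℝ) := by
      rcases le_or_gt (s:ℝ) (δ:ℝ) with h | h
      · have : (0:ℝ) ≤ (a:ℝ) := a.coe_nonneg
        linarith
      · have h1 : (k:ℝ) * ((s:ℝ) - (δ:ℝ)) < ((r:ℝ)/(s:ℝ) + 1) * ((s:ℝ) - (δ:ℝ)) :=
          mul_lt_mul_of_pos_right hkub (by linarith)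
        have hRD : (s:ℝ) * (s:ℝ) ≤ (r:ℝ) * (δ:ℝ) := by
          have h5 : (s:ℝ) * (s:ℝ) / (δ:ℝ) ≤ (r:ℝ) := by rw [hB] at hr; linarith
          have h6 : (s:ℝ) * (s:ℝ) / (δ:ℝ) * (δ:ℝ) = (s:ℝ) * (s:ℝ) := by
            field_simp
          nlinarith
        have h2 : ((r:ℝ)/(s:ℝ) + 1) * ((s:ℝ) - (δ:ℝ)) ≤ (r:ℝ) := by
          have hRdS : (s:ℝ) ≤ (r:ℝ) * (δ:ℝ) / (s:ℝ) := by
            rw [le_div_iff₀ hS]; nlinarith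
          have expand : ((r:ℝ)/(s:ℝ) + 1) * ((s:ℝ) - (δ:ℝ))
              = (r:ℝ) - (r:ℝ) * (δ:ℝ) / (s:ℝ) + (s:ℝ) - (δ:ℝ) := by
            field_simp; ring
          linarith
        have h3 : (s:ℝ) - (δ:ℝ) ≤ (r:ℝ) / (k:ℝ) := by
          rw [le_div_iff₀ hkposR]
          nlinarith [h1.trans_le h2]
        rw [hcoea]; linarith
    have haF : a ∈ F := by
      refine hsub a ?_ ha_le
      rw [← NNReal.coe_le_coe, NNReal.coe_add]
      linarith
    have hkk : ((k - 1 : ℕ) : ℝ≥0) + 1 = (k : ℝ≥0) := by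
      have h7 : k - 1 + 1 = k := Nat.succ_pred_eq_of_pos hk1
      exact_mod_cast congrArg (fun m : ℕ => (m : ℝ≥0)) h7
    have hka : (((k - 1 : ℕ) : ℝ≥0) + 1) * a = r := by
      rw [hkk, ha, mul_comm, div_mul_cancel₀ _ hknz]
    have := hmul (k - 1) a haF
    rwa [hka] at this
  obtain ⟨n, hn⟩ := exists_nat_ge (B / (s:ℝ))
  have hnsF : B ≤ (((n : ℝ≥0) * s : ℝ≥0) : ℝ) := by
    have hc : (((n : ℝ≥0) * s : ℝ≥0) : ℝ) = (n:ℝ) * (s:ℝ) := by push_cast; ring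
    have h8 : B / (s:ℝ) * (s:ℝ) = B := div_mul_cancel₀ _ hS.ne'
    rw [hc]
    calc B = B / (s:ℝ) * (s:ℝ) := h8.symm
      _ ≤ (n:ℝ) * (s:ℝ) := mul_le_mul_of_nonneg_right hn hS.le
  refine ⟨(n : ℝ≥0) * s, hbig _ hnsF, hbig _ ?_⟩
  rw [NNReal.coe_add]
  have := t.coe_nonneg
  linarith

/-- If the semiflow fixes `y` at some positive time, it fixes `y` at all times. -/
lemma fix_forever [Finite X] [T0Space X] (φ : ℝ≥0 → X → X) (hφ : IsSemiflow φ) (y : X)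
    {s : ℝ≥0} (hs : 0 < s) (hsy : φ s y = y) (t : ℝ≥0) : φ t y = y := by
  set F : Set ℝ≥0 := {t | φ t y = y} with hF
  have hadd : ∀ a ∈ F, ∀ b ∈ F, a + b ∈ F := by
    intro a ha b hb
    have ha' : φ a y = y := ha
    have hb' : φ b y = y := hb
    show φ (a + b) y = y
    rw [← hφ.2.2 a b y, hb', ha']
  have h1 : ∀ᶠ u in 𝓝 s, φ u y ⤳ y := by
    have := ev_spec φ hφ y s; rwa [hsy] at this
  have h2 : ∀ᶠ u in 𝓝 (0:ℝ≥0), φ u y ⤳ y := by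
    have := ev_spec φ hφ y 0; rwa [hφ.2.1 y] at this
  obtain ⟨ε₁, hε₁, hb1⟩ := Metric.eventually_nhds_iff.mp h1
  obtain ⟨ε₂, hε₂, hb2⟩ := Metric.eventually_nhds_iff.mp h2
  set δ : ℝ≥0 := min ((min ε₁ ε₂).toNNReal / 2) s with hδdef
  have hmin : (0:ℝ) < min ε₁ ε₂ := lt_min hε₁ hε₂
  have hδpos : 0 < δ := by
    apply lt_min _ hs
    have h10 : 0 < (min ε₁ ε₂).toNNReal := Real.toNNReal_pos.mpr hmin
    positivity
  have hδcoe : (δ:ℝ) ≤ min ε₁ ε₂ / 2 := by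
    have h9 : δ ≤ (min ε₁ ε₂).toNNReal / 2 := min_le_left _ _
    have := NNReal.coe_le_coe.mpr h9
    rwa [NNReal.coe_div, Real.coe_toNNReal _ hmin.le] at this
  have hδ1 : (δ:ℝ) < ε₁ := lt_of_le_of_lt hδcoe (by
    have := min_le_left ε₁ ε₂; linarith)
  have hδ2 : (δ:ℝ) < ε₂ := lt_of_le_of_lt hδcoe (by
    have := min_le_right ε₁ ε₂; linarith)
  have hδs : δ ≤ s := min_le_right _ _
  have hsub : ∀ u : ℝ≥0, s ≤ u + δ → u ≤ s → u ∈ F := by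
    intro u h1u h2u
    have hus : (u:ℝ) ≤ (s:ℝ) := h2u
    have hsu : (s:ℝ) ≤ (u:ℝ) + (δ:ℝ) := by exact_mod_cast h1u
    have hd1 : φ u y ⤳ y := by
      apply hb1
      rw [NNReal.dist_eq, abs_sub_lt_iff]
      constructor <;> linarith
    set v : ℝ≥0 := s - u with hv
    have hvs : u + v = s := add_tsub_cancel_of_le h2u
    have hvδ : v ≤ δ := tsub_le_iff_left.mpr h1u
    have hd2 : φ v y ⤳ y := by
      apply hb2
      rw [NNReal.dist_eq]
      have : (v:ℝ) ≤ (δ:ℝ) := hvδ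
      have hvnn := v.coe_nonneg
      rw [NNReal.coe_zero, sub_zero, abs_of_nonneg hvnn]
      linarith
    have h3 : φ u (φ v y) ⤳ φ u y := hd2.map (cont_space φ hφ u)
    rw [hφ.2.2 u v y, hvs, hsy] at h3
    exact (hd1.antisymm h3).eq
  obtain ⟨u, huF, htuF⟩ := cover hadd hs hδpos hsub t
  have huF' : φ u y = y := huF
  have htuF' : φ (t + u) y = y := htuF
  calc φ t y = φ t (φ u y) := by rw [huF']
    _ = φ (t + u) y := hφ.2.2 t u y
    _ = y := htuF'

/-- Key claim: if `x` is not a down beat point and is moved at every positive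
time, then some point strictly below `x` is moved at every positive time. -/
lemma claim1 [Finite X] [T0Space X] (x : X) (hx : ¬ IsDownBeatPoint x)
    (φ : ℝ≥0 → X → X) (hφ : IsSemiflow φ)
    (hmove : ∀ t : ℝ≥0, 0 < t → φ t x ≠ x) :
    ∃ y : X, y ⤳ x ∧ y ≠ x ∧ ∀ t : ℝ≥0, 0 < t → φ t y ≠ y := by
  by_contra h
  push_neg at h
  have hfix : ∀ y : X, y ⤳ x → y ≠ x → ∀ t : ℝ≥0, φ t y = y := by
    intro y h1 h2 t
    obtain ⟨t₀, ht₀, hft₀⟩ := h y h1 h2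
    exact fix_forever φ hφ y ht₀ hft₀ t
  have hev0 : ∀ᶠ u in 𝓝 (0:ℝ≥0), φ u x ⤳ x := by
    have := ev_spec φ hφ x 0; rwa [hφ.2.1 x] at this
  obtain ⟨t₀, ht₀spec, ht₀pos⟩ :=
    ((hev0.filter_mono nhdsWithin_le_nhds).and
      (eventually_mem_nhdsWithin (s := Set.Ioi (0:ℝ≥0)))).exists
  set a : X := φ t₀ x with ha
  have hax : a ⤳ x := ht₀spec
  have hanex : a ≠ x := hmove t₀ ht₀pos
  apply hx
  refine ⟨a, ⟨hax, hanex⟩, ?_⟩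
  intro z hz hznex
  have hpre : IsOpen ((fun p : ℝ≥0 × X => φ p.1 p.2) ⁻¹' {w : X | w ⤳ a}) :=
    (isOpen_specSet a).preimage hφ.1
  have hmem : (t₀, x) ∈ (fun p : ℝ≥0 × X => φ p.1 p.2) ⁻¹' {w : X | w ⤳ a} := by
    show φ t₀ x ⤳ a
    rw [← ha]
  obtain ⟨U, V, hU, hV, htU, hxV, hUV⟩ := isOpen_prod_iff.mp hpre t₀ x hmem
  have hzV : z ∈ V := hz.mem_open hV hxV
  have hφz : φ t₀ z ⤳ a := hUV (Set.mk_mem_prod htU hzV)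
  rwa [hfix z hz hznex t₀] at hφz

end SemiflowAux

/-- If `x` is not a down beat point but some non-trivial semiflow moves `x` at
every positive time, then there is a down beat point `y < x` that the semiflow
also moves at every positive time. -/
theorem exists_moved_downBeatPoint_below {X : Type*} [TopologicalSpace X] [Finite X]
    [T0Space X] (x : X) (hx : ¬ IsDownBeatPoint x)
    (φ : ℝ≥0 → X → X) (hφ : IsSemiflow φ) (hnt : ¬ IsTrivialSemiflow φ)
    (hmove : ∀ t : ℝ≥0, 0 < t → φ t x ≠ x) :
    ∃ y : X, IsDownBeatPoint y ∧ (y ⤳ x ∧ y ≠ x) ∧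
      ∀ t : ℝ≥0, 0 < t → φ t y ≠ y := by
  classical
  set M : Set X := {y | (y ⤳ x ∧ y ≠ x) ∧ ∀ t : ℝ≥0, 0 < t → φ t y ≠ y} with hM
  have hne : M.Nonempty := by
    obtain ⟨y, h1, h2, h3⟩ := SemiflowAux.claim1 x hx φ hφ hmove
    exact ⟨y, ⟨h1, h2⟩, h3⟩
  -- minimal element of M w.r.t. strict specialization
  let r : X → X → Prop := fun a b => a ⤳ b ∧ a ≠ b
  haveI : IsTrans X r := ⟨by
    rintro a b c ⟨h1, h2⟩ ⟨h3, h4⟩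
    refine ⟨h1.trans h3, fun hac => ?_⟩
    subst hac
    exact h2 (h1.antisymm h3).eq⟩
  haveI : IsIrrefl X r := ⟨fun a h => h.2 rfl⟩
  obtain ⟨y, hyM, hymin⟩ := (Finite.wellFounded_of_trans_of_irrefl r).has_min M hne
  refine ⟨y, ?_, hyM.1, hyM.2⟩
  by_contra hyd
  obtain ⟨z, hz1, hz2, hz3⟩ := SemiflowAux.claim1 y hyd φ hφ hyM.2
  have hzx : z ⤳ x := hz1.trans hyM.1.1
  have hznex : z ≠ x := by
    intro hzeq
    subst hzeq
    exact hyM.1.2 (hyM.1.1.antisymm hz1).eq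
  exact hymin z ⟨⟨hzx, hznex⟩, hz3⟩ ⟨hz1, hz2⟩
end
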